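/- There do not exist an integer v ≥ 2 and a 9-divisible set C of points of PG(v−1, 3) (i.e., of 1-dimensional subspaces of 𝔽₃^v) with |C| = 89. -/
import Mathlib


open scoped Classical

section PGDefs

variable {F : Type} [Field F] {M : Type} [AddCommGroup M] [Module F M]

/-- The number of points of `C` contained in the subspace `S`, i.e. `|C ∩ S|`. -/
noncomputable def interCard (C : Finset (Submodule F M)) (S : Submodule F M) : ℕ :=
  (C.filter (fun P => P ≤ S)).card

/-- `H` is a hyperplane, i.e. a subspace of codimension 1. -/
def IsHyperplane (H : Submodule F M) : Prop :=
  Module.finrank F ↥H = Module.finrank F M - 1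

/-- Every element of `C` is a point, i.e. a 1-dimensional subspace. -/
def IsPointSet (C : Finset (Submodule F M)) : Prop :=
  ∀ P ∈ C, Module.finrank F ↥P = 1

/-- `C` is `Δ`-divisible: `|C ∩ H| ≡ |C| (mod Δ)` for every hyperplane `H`. -/
def DivisibleSet (Δ : ℕ) (C : Finset (Submodule F M)) : Prop :=
  ∀ H : Submodule F M, IsHyperplane H → interCard C H ≡ C.card [MOD Δ]

noncomputable instance fintypeSubmodule [Finite M] : Fintype (Submodule F M) :=
  have : Finite (Submodule F M) :=
    Finite.of_injective (fun S => (S : Set M)) SetLike.coe_injective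
  Fintype.ofFinite _

end PGDefs

section Aux

variable {V : Type} [AddCommGroup V] [Module (ZMod 3) V] [FiniteDimensional (ZMod 3) V]

noncomputable instance : Fintype V := by
  have : Finite V := Module.finite_of_finite (ZMod 3)
  exact Fintype.ofFinite _

noncomputable instance : Fintype (Module.Dual (ZMod 3) V) := by
  have : Finite (Module.Dual (ZMod 3) V) :=
    Finite.of_injective (fun φ => (φ : V → ZMod 3)) DFunLike.coe_injective
  exact Fintype.ofFinite _

lemma card_V : Fintype.card V = 3 ^ (Module.finrank (ZMod 3) V) := by
  have := Module.card_eq_pow_finrank (K := ZMod 3) (V := V)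
  simpa [ZMod.card] using this

lemma card_submodule (S : Submodule (ZMod 3) V) :
    Fintype.card S = 3 ^ (Module.finrank (ZMod 3) S) := by
  have := Module.card_eq_pow_finrank (K := ZMod 3) (V := S)
  simpa [ZMod.card] using this

lemma finrank_dualAnnihilator (S : Submodule (ZMod 3) V) :
    Module.finrank (ZMod 3) S.dualAnnihilator
      = Module.finrank (ZMod 3) V - Module.finrank (ZMod 3) S := by
  have h1 : Module.finrank (ZMod 3) (V ⧸ S) = Module.finrank (ZMod 3) S.dualAnnihilator :=
    LinearEquiv.finrank_eq (Subspace.quotEquivAnnihilator S)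
  have h2 := Submodule.finrank_quotient_add_finrank S
  omega

lemma card_filter_le_ker (S : Submodule (ZMod 3) V) :
    (Finset.univ.filter fun φ : Module.Dual (ZMod 3) V => S ≤ LinearMap.ker φ).card
      = 3 ^ (Module.finrank (ZMod 3) V - Module.finrank (ZMod 3) S) := by
  have hmem : ∀ φ : Module.Dual (ZMod 3) V, S ≤ LinearMap.ker φ ↔ φ ∈ S.dualAnnihilator := by
    intro φ
    rw [Submodule.mem_dualAnnihilator]
    constructor
    · intro h w hw
      exact h hw
    · intro h x hx
      exact LinearMap.mem_ker.2 (h x hx)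
  rw [← finrank_dualAnnihilator S, ← card_submodule (S.dualAnnihilator)]
  rw [← Fintype.card_subtype]
  apply Fintype.card_congr
  exact Equiv.subtypeEquivRight hmem


lemma finrank_ker_of_ne_zero {φ : Module.Dual (ZMod 3) V} (h : φ ≠ 0) :
    Module.finrank (ZMod 3) (LinearMap.ker φ) = Module.finrank (ZMod 3) V - 1 := by
  have hr : LinearMap.range φ = ⊤ := by
    rcases DFunLike.ne_iff.1 h with ⟨x, hx⟩
    simp only [LinearMap.zero_apply] at hx
    rw [eq_top_iff]
    intro c _
    exact ⟨(c * (φ x)⁻¹) • x, by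
      simp [map_smul, smul_eq_mul, mul_assoc, inv_mul_cancel₀ hx]⟩
  have h2 := LinearMap.finrank_range_add_finrank_ker φ
  rw [hr, finrank_top] at h2
  have : Module.finrank (ZMod 3) (ZMod 3) = 1 := Module.finrank_self _
  omega

-- distinct points have trivial intersection and rank-2 sup
lemma point_inf_eq_bot {P Q : Submodule (ZMod 3) V}
    (hP : Module.finrank (ZMod 3) P = 1) (hQ : Module.finrank (ZMod 3) Q = 1)
    (hne : P ≠ Q) : P ⊓ Q = ⊥ := by
  by_contra hbot
  rcases Submodule.exists_mem_ne_zero_of_ne_bot hbot with ⟨x, hx, hx0⟩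
  have hxP : x ∈ P := hx.1
  have hxQ : x ∈ Q := hx.2
  have hsP : (Submodule.span (ZMod 3) {x}) = P := by
    apply Submodule.eq_of_le_of_finrank_le ((Submodule.span_singleton_le_iff_mem x P).2 hxP)
    rw [finrank_span_singleton hx0, hP]
  have hsQ : (Submodule.span (ZMod 3) {x}) = Q := by
    apply Submodule.eq_of_le_of_finrank_le ((Submodule.span_singleton_le_iff_mem x Q).2 hxQ)
    rw [finrank_span_singleton hx0, hQ]
  exact hne (hsP ▸ hsQ)

lemma finrank_sup_points {P Q : Submodule (ZMod 3) V}
    (hP : Module.finrank (ZMod 3) P = 1) (hQ : Module.finrank (ZMod 3) Q = 1)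
    (hne : P ≠ Q) : Module.finrank (ZMod 3) ↥(P ⊔ Q) = 2 := by
  have := Submodule.finrank_sup_add_finrank_inf_eq P Q
  rw [point_inf_eq_bot hP hQ hne, finrank_bot, hP, hQ] at this
  omega

noncomputable instance : Fintype (Submodule (ZMod 3) V) :=
  have : Finite (Submodule (ZMod 3) V) :=
    Finite.of_injective (fun S => (S : Set V)) SetLike.coe_injective
  Fintype.ofFinite _

lemma card_filter_mem (W : Submodule (ZMod 3) V) :
    (Finset.univ.filter fun x : V => x ∈ W).card = 3 ^ (Module.finrank (ZMod 3) W) := by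
  rw [← card_submodule W]
  rw [← Fintype.card_subtype]

lemma two_mul_card_points (W : Submodule (ZMod 3) V) :
    2 * (Finset.univ.filter fun P : Submodule (ZMod 3) V =>
        Module.finrank (ZMod 3) P = 1 ∧ P ≤ W).card
      = 3 ^ (Module.finrank (ZMod 3) W) - 1 := by
  classical
  set NZ := Finset.univ.filter (fun x : V => x ∈ W ∧ x ≠ 0) with hNZ
  set Pts := Finset.univ.filter (fun P : Submodule (ZMod 3) V =>
      Module.finrank (ZMod 3) P = 1 ∧ P ≤ W) with hPts
  have hcNZ : NZ.card = 3 ^ (Module.finrank (ZMod 3) W) - 1 := by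
    have : NZ = (Finset.univ.filter fun x : V => x ∈ W).erase 0 := by
      ext x
      simp [hNZ, and_comm]
    rw [this, Finset.card_erase_of_mem (by simp [W.zero_mem]), card_filter_mem]
  have hmap : ∀ x ∈ NZ, Submodule.span (ZMod 3) {x} ∈ Pts := by
    intro x hx
    simp only [hNZ, Finset.mem_filter, Finset.mem_univ, true_and] at hx
    simp only [hPts, Finset.mem_filter, Finset.mem_univ, true_and]
    exact ⟨finrank_span_singleton hx.2, (Submodule.span_singleton_le_iff_mem x W).2 hx.1⟩
  have hpart := Finset.card_eq_sum_card_fiberwise hmap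
  have hfib : ∀ P ∈ Pts, (NZ.filter fun x => Submodule.span (ZMod 3) {x} = P).card = 2 := by
    intro P hP
    simp only [hPts, Finset.mem_filter, Finset.mem_univ, true_and] at hP
    have : NZ.filter (fun x => Submodule.span (ZMod 3) {x} = P)
        = (Finset.univ.filter fun x : V => x ∈ P).erase 0 := by
      ext x
      simp only [hNZ, Finset.mem_filter, Finset.mem_univ, true_and, Finset.mem_erase,
        Finset.filter_filter]
      constructor
      · rintro ⟨⟨hxW, hx0⟩, hsp⟩
        exact ⟨hx0, hsp ▸ Submodule.mem_span_singleton_self x⟩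
      · rintro ⟨hx0, hxP⟩
        refine ⟨⟨hP.2 hxP, hx0⟩, ?_⟩
        apply Submodule.eq_of_le_of_finrank_le ((Submodule.span_singleton_le_iff_mem x P).2 hxP)
        rw [finrank_span_singleton hx0, hP.1]
    rw [this, Finset.card_erase_of_mem (by simp [P.zero_mem]), card_filter_mem, hP.1]
    rfl
  rw [hpart, Finset.sum_congr rfl hfib, Finset.sum_const, smul_eq_mul, mul_comm] at hcNZ
  rw [hcNZ]

end Aux

section Base

variable {v : ℕ}

lemma cert_nonneg (j : ℤ) (hj : 0 ≤ j) : 0 ≤ (9*j + 8 - 26) * (9*j + 8 - 35) := by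
  rcases le_or_gt j 2 with h | h
  · nlinarith
  · nlinarith

set_option maxHeartbeats 1000000 in
lemma base_case (hv2 : 2 ≤ v) (hv8 : v ≤ 8)
    (C : Finset (Submodule (ZMod 3) (Fin v → ZMod 3)))
    (hpts : IsPointSet C) (hdiv : DivisibleSet 9 C) (hcard : C.card = 89) : False := by
  classical
  set V := (Fin v → ZMod 3) with hV
  have hfr : Module.finrank (ZMod 3) V = v := Module.finrank_fin_fun _
  set D := (Finset.univ.filter fun φ : Module.Dual (ZMod 3) V => φ ≠ 0) with hD
  set m : Module.Dual (ZMod 3) V → ℕ := fun φ => interCard C (LinearMap.ker φ) with hm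
  -- each kernel is a hyperplane
  have hker : ∀ φ ∈ D, IsHyperplane (LinearMap.ker φ) := by
    intro φ hφ
    simp only [hD, Finset.mem_filter, Finset.mem_univ, true_and] at hφ
    unfold IsHyperplane
    rw [finrank_ker_of_ne_zero hφ]
  have hmod : ∀ φ ∈ D, m φ % 9 = 8 := by
    intro φ hφ
    have := hdiv _ (hker φ hφ)
    unfold Nat.ModEq at this
    rw [hcard] at this
    exact this.trans (by norm_num)
  -- counting: for a submodule S of finrank d, #{φ ≠ 0 : S ≤ ker φ} = 3^(v-d) - 1
  have hcount : ∀ S : Submodule (ZMod 3) V,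
      (D.filter fun φ => S ≤ LinearMap.ker φ).card
        = 3 ^ (v - Module.finrank (ZMod 3) S) - 1 := by
    intro S
    have h1 : D.filter (fun φ => S ≤ LinearMap.ker φ)
        = (Finset.univ.filter fun φ : Module.Dual (ZMod 3) V =>
            S ≤ LinearMap.ker φ).erase 0 := by
      ext φ
      simp only [hD, Finset.filter_filter, Finset.mem_filter, Finset.mem_univ, true_and,
        Finset.mem_erase, and_comm]
    rw [h1, Finset.card_erase_of_mem (by simp), card_filter_le_ker, hfr]
  have hpow : ∀ d : ℕ, ((3 ^ (v - d) - 1 : ℕ) : ℤ) = 3 ^ (v - d) - 1 := by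
    intro d
    have : 1 ≤ 3 ^ (v - d) := Nat.one_le_pow _ _ (by norm_num)
    push_cast [this]
    ring
  have hinner : ∀ S : Submodule (ZMod 3) V,
      (((D.filter fun φ => S ≤ LinearMap.ker φ).card : ℕ) : ℤ)
        = 3 ^ (v - Module.finrank (ZMod 3) S) - 1 := by
    intro S
    rw [hcount S, hpow]
  -- first standard equation
  have hA : ∑ φ ∈ D, (m φ : ℤ) = 89 * (3 ^ (v - 1) - 1) := by
    have hsplit : ∀ φ, (m φ : ℤ) = ∑ P ∈ C, if P ≤ LinearMap.ker φ then (1 : ℤ) else 0 := by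
      intro φ
      have h0 : m φ = ∑ P ∈ C, if P ≤ LinearMap.ker φ then 1 else 0 :=
        Finset.card_filter _ _
      rw [h0]
      push_cast
      rfl
    rw [Finset.sum_congr rfl (fun φ _ => hsplit φ), Finset.sum_comm]
    have h1 : ∀ P ∈ C, ∑ φ ∈ D, (if P ≤ LinearMap.ker φ then (1 : ℤ) else 0)
        = 3 ^ (v - 1) - 1 := by
      intro P hP
      have h2 := hinner P
      rw [hpts P hP] at h2
      exact (Finset.sum_boole _ _).trans h2
    rw [Finset.sum_congr rfl h1, Finset.sum_const, hcard, nsmul_eq_mul]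
    norm_num
  -- second standard equation
  have hB : ∑ φ ∈ D, (m φ : ℤ) * ((m φ : ℤ) - 1) = 89 * 88 * (3 ^ (v - 2) - 1) := by
    have hsplit2 : ∀ φ : Module.Dual (ZMod 3) V, (m φ : ℤ) * ((m φ : ℤ) - 1)
        = ∑ pq ∈ C.offDiag,
            if pq.1 ≤ LinearMap.ker φ ∧ pq.2 ≤ LinearMap.ker φ then (1:ℤ) else 0 := by
      intro φ
      set s := C.filter (fun P => P ≤ LinearMap.ker φ) with hs
      have h0 : s.offDiag = C.offDiag.filter
          (fun pq => pq.1 ≤ LinearMap.ker φ ∧ pq.2 ≤ LinearMap.ker φ) := by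
        ext pq
        simp only [Finset.mem_offDiag, Finset.mem_filter, hs]
        tauto
      have hmφ : m φ = s.card := rfl
      have h1 : s.offDiag.card = s.card * s.card - s.card := Finset.offDiag_card s
      have hle : s.card ≤ s.card * s.card := by nlinarith
      have h2 : ((s.offDiag.card : ℕ) : ℤ) = (m φ : ℤ) * ((m φ:ℤ) - 1) := by
        rw [h1, hmφ]
        push_cast [hle]
        ring
      rw [← h2, h0, Finset.card_filter]
      push_cast
      rfl
    rw [Finset.sum_congr rfl (fun φ _ => hsplit2 φ), Finset.sum_comm]
    have h1 : ∀ pq ∈ C.offDiag, ∑ φ ∈ D,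
        (if pq.1 ≤ LinearMap.ker φ ∧ pq.2 ≤ LinearMap.ker φ then (1:ℤ) else 0)
          = 3 ^ (v-2) - 1 := by
      rintro ⟨P,Q⟩ hpq
      rw [Finset.mem_offDiag] at hpq
      have hcond : ∀ φ : Module.Dual (ZMod 3) V,
          (P ≤ LinearMap.ker φ ∧ Q ≤ LinearMap.ker φ) ↔ (P ⊔ Q ≤ LinearMap.ker φ) :=
        fun φ => sup_le_iff.symm
      simp only [hcond]
      have h2 := hinner (P ⊔ Q)
      rw [finrank_sup_points (hpts P hpq.1) (hpts Q hpq.2.1) hpq.2.2] at h2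
      exact (Finset.sum_boole _ _).trans h2
    rw [Finset.sum_congr rfl h1, Finset.sum_const, Finset.offDiag_card, hcard, nsmul_eq_mul]
    norm_num
  -- cardinality of D
  have hDcard : ((D.card : ℕ) : ℤ) = 3 ^ v - 1 := by
    have h0 : D = Finset.univ.erase 0 := by
      ext φ
      simp [hD]
    rw [h0, Finset.card_erase_of_mem (Finset.mem_univ _), Finset.card_univ]
    rw [card_V (V := Module.Dual (ZMod 3) V), Subspace.dual_finrank_eq, hfr]
    have : 1 ≤ 3 ^ v := Nat.one_le_pow _ _ (by norm_num)
    push_cast [this]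
    ring
  -- the certificate sum
  have hsum : ∑ φ ∈ D, ((m φ : ℤ) - 26) * ((m φ : ℤ) - 35) = 2 * 3 ^ (v-2) - 3402 := by
    have hexp : ∀ x : ℤ, (x - 26) * (x - 35) = x*(x-1) - 60*x + 910 := fun x => by ring
    calc ∑ φ ∈ D, ((m φ:ℤ) - 26) * ((m φ:ℤ) - 35)
        = ∑ φ ∈ D, ((m φ:ℤ)*((m φ:ℤ)-1) - 60*(m φ:ℤ) + 910) :=
          Finset.sum_congr rfl (fun φ _ => hexp _)
      _ = (∑ φ ∈ D, (m φ:ℤ)*((m φ:ℤ)-1)) - 60*(∑ φ ∈ D, (m φ:ℤ)) + 910*D.card := by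
          rw [Finset.sum_add_distrib, Finset.sum_sub_distrib, ← Finset.mul_sum,
            Finset.sum_const, nsmul_eq_mul]
          ring
      _ = 2 * 3 ^ (v-2) - 3402 := by
          have e1 : (3:ℤ)^(v-1) = 3 * 3^(v-2) := by
            rw [show (3:ℤ)^(v-1) = 3^((v-2)+1) from by congr 1; omega, pow_succ]
            ring
          have e2 : (3:ℤ)^v = 9 * 3^(v-2) := by
            rw [show (3:ℤ)^v = 3^((v-2)+2) from by congr 1; omega, pow_add]
            ring
          rw [hB, hA, hDcard, e1, e2]
          ring
  have hterm : ∀ φ ∈ D, (0:ℤ) ≤ ((m φ:ℤ) - 26) * ((m φ:ℤ) - 35) := by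
    intro φ hφ
    have h8 := hmod φ hφ
    have hj : m φ = 9 * (m φ / 9) + 8 := by omega
    set j := m φ / 9 with hjdef
    rw [hj]
    push_cast
    exact cert_nonneg j (by positivity)
  have hge : (0:ℤ) ≤ 2 * 3 ^ (v-2) - 3402 := hsum ▸ Finset.sum_nonneg hterm
  have hle : (3:ℤ) ^ (v - 2) ≤ 729 := by
    calc (3:ℤ)^(v-2) ≤ 3^6 := by
          apply pow_le_pow_right₀ (by norm_num) (by omega)
      _ = 729 := by norm_num
  linarith

end Base

section Step

variable {v : ℕ}

set_option maxHeartbeats 1000000 in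
set_option synthInstance.maxHeartbeats 400000 in
lemma step_case (hv : 9 ≤ v)
    (C : Finset (Submodule (ZMod 3) (Fin v → ZMod 3)))
    (hpts : IsPointSet C) (hdiv : DivisibleSet 9 C) (hcard : C.card = 89) :
    ∃ C' : Finset (Submodule (ZMod 3) (Fin (v-1) → ZMod 3)),
      IsPointSet C' ∧ DivisibleSet 9 C' ∧ C'.card = 89 := by
  classical
  set V := (Fin v → ZMod 3) with hV
  have hfr : Module.finrank (ZMod 3) V = v := Module.finrank_fin_fun _
  -- C consists of points
  have hCpts : ∀ Q ∈ C, Module.finrank (ZMod 3) Q = 1 := hpts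
  -- find a good point P
  set Pts := (Finset.univ.filter fun P : Submodule (ZMod 3) V =>
      Module.finrank (ZMod 3) P = 1 ∧ P ≤ (⊤ : Submodule (ZMod 3) V)) with hPts
  have hPtscard : 2 * Pts.card = 3 ^ v - 1 := by
    rw [hPts, two_mul_card_points ⊤, finrank_top, hfr]
  set bad := Pts.filter (fun P => ∃ Q ∈ C, ∃ R ∈ C, P ≤ Q ⊔ R) with hbad
  -- bound the number of bad points
  have hcover : bad ⊆ C ∪ (C.powersetCard 2).biUnion (fun p =>
      (Finset.univ.filter fun P : Submodule (ZMod 3) V =>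
        Module.finrank (ZMod 3) P = 1 ∧ P ≤ p.sup id) \ p) := by
    intro P hP
    simp only [hbad, Finset.mem_filter] at hP
    obtain ⟨hPmem, Q, hQ, R, hR, hle⟩ := hP
    simp only [hPts, Finset.mem_filter, Finset.mem_univ, true_and] at hPmem
    rw [Finset.mem_union]
    by_cases hPC : P ∈ C
    · exact Or.inl hPC
    · right
      have hQR : Q ≠ R := by
        rintro rfl
        rw [sup_idem] at hle
        have : P = Q := Submodule.eq_of_le_of_finrank_le hle (by rw [hCpts Q hQ, hPmem.1])
        exact hPC (this ▸ hQ)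
      refine Finset.mem_biUnion.2 ⟨{Q, R}, ?_, ?_⟩
      · rw [Finset.mem_powersetCard]
        constructor
        · intro x hx
          rcases Finset.mem_insert.1 hx with rfl | hx
          · exact hQ
          · exact (Finset.mem_singleton.1 hx) ▸ hR
        · rw [Finset.card_insert_of_notMem (by simpa using hQR), Finset.card_singleton]
      · rw [Finset.mem_sdiff]
        constructor
        · simp only [Finset.mem_filter, Finset.mem_univ, true_and]
          refine ⟨hPmem.1, ?_⟩
          rw [Finset.sup_insert, Finset.sup_singleton]
          simpa using hle
        · intro hPp
          rcases Finset.mem_insert.1 hPp with rfl | hPp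
          · exact hPC hQ
          · exact hPC ((Finset.mem_singleton.1 hPp) ▸ hR)
  have hbadcard : bad.card ≤ 7921 := by
    have h1 : ∀ p ∈ C.powersetCard 2,
        ((Finset.univ.filter fun P : Submodule (ZMod 3) V =>
          Module.finrank (ZMod 3) P = 1 ∧ P ≤ p.sup id) \ p).card ≤ 2 := by
      intro p hp
      rw [Finset.mem_powersetCard] at hp
      obtain ⟨Q, R, hQR, rfl⟩ := Finset.card_eq_two.1 hp.2
      have hQ : Q ∈ C := hp.1 (by simp)
      have hR : R ∈ C := hp.1 (by simp)
      have hsup : ({Q, R} : Finset (Submodule (ZMod 3) V)).sup id = Q ⊔ R := by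
        rw [Finset.sup_insert, Finset.sup_singleton]
        rfl
      have hrk : Module.finrank (ZMod 3) ↥(Q ⊔ R) = 2 :=
        finrank_sup_points (hCpts Q hQ) (hCpts R hR) hQR
      have hW : 2 * (Finset.univ.filter fun P : Submodule (ZMod 3) V =>
          Module.finrank (ZMod 3) P = 1 ∧ P ≤ Q ⊔ R).card = 8 := by
        rw [two_mul_card_points (Q ⊔ R), hrk]
        norm_num
      have hcard4 : (Finset.univ.filter fun P : Submodule (ZMod 3) V =>
          Module.finrank (ZMod 3) P = 1 ∧ P ≤ Q ⊔ R).card = 4 := by omega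
      have hsub : ({Q, R} : Finset (Submodule (ZMod 3) V))
          ⊆ (Finset.univ.filter fun P : Submodule (ZMod 3) V =>
            Module.finrank (ZMod 3) P = 1 ∧ P ≤ Q ⊔ R) := by
        intro x hx
        simp only [Finset.mem_filter, Finset.mem_univ, true_and]
        rcases Finset.mem_insert.1 hx with rfl | hx
        · exact ⟨hCpts x hQ, le_sup_left⟩
        · rw [Finset.mem_singleton] at hx
          subst hx
          exact ⟨hCpts x hR, le_sup_right⟩
      rw [hsup, Finset.card_sdiff_of_subset hsub, hcard4, hp.2]
    calc bad.card ≤ (C ∪ (C.powersetCard 2).biUnion (fun p =>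
        (Finset.univ.filter fun P : Submodule (ZMod 3) V =>
          Module.finrank (ZMod 3) P = 1 ∧ P ≤ p.sup id) \ p)).card :=
        Finset.card_le_card hcover
      _ ≤ C.card + ((C.powersetCard 2).biUnion (fun p =>
          (Finset.univ.filter fun P : Submodule (ZMod 3) V =>
            Module.finrank (ZMod 3) P = 1 ∧ P ≤ p.sup id) \ p)).card :=
        Finset.card_union_le _ _
      _ ≤ C.card + ∑ p ∈ C.powersetCard 2,
          ((Finset.univ.filter fun P : Submodule (ZMod 3) V =>
            Module.finrank (ZMod 3) P = 1 ∧ P ≤ p.sup id) \ p).card :=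
        Nat.add_le_add_left (Finset.card_biUnion_le) _
      _ ≤ C.card + ∑ p ∈ C.powersetCard 2, 2 := Nat.add_le_add_left (Finset.sum_le_sum h1) _
      _ = 89 + (C.powersetCard 2).card * 2 := by rw [hcard, Finset.sum_const, smul_eq_mul]
      _ = 7921 := by rw [Finset.card_powersetCard, hcard, Nat.choose_two_right]
  -- Pts is large
  have hPtsbig : 9841 ≤ Pts.card := by
    have h9 : (3:ℕ) ^ 9 ≤ 3 ^ v := Nat.pow_le_pow_right (by norm_num) hv
    omega
  have hgood : ∃ P : Submodule (ZMod 3) V, Module.finrank (ZMod 3) P = 1 ∧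
      ∀ Q ∈ C, ∀ R ∈ C, ¬ P ≤ Q ⊔ R := by
    have hne : (Pts \ bad).Nonempty := by
      rw [← Finset.card_pos]
      have h1 := Finset.le_card_sdiff bad Pts
      omega
    obtain ⟨P, hP⟩ := hne
    rw [Finset.mem_sdiff] at hP
    have hP1 : Module.finrank (ZMod 3) P = 1 := by
      have := hP.1
      rw [hPts, Finset.mem_filter] at this
      exact this.2.1
    refine ⟨P, hP1, fun Q hQ R hR hle => ?_⟩
    exact hP.2 (by
      rw [hbad, Finset.mem_filter]
      exact ⟨hP.1, Q, hQ, R, hR, hle⟩)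
  obtain ⟨P, hP1, hPgood⟩ := hgood
  -- P is disjoint from every point of C
  have hPne : ∀ Q ∈ C, P ≠ Q := by
    intro Q hQ h
    apply hPgood Q hQ Q hQ
    rw [sup_idem]
    exact h.le
  -- the projection map
  have hquot : Module.finrank (ZMod 3) (V ⧸ P) = v - 1 := by
    have := Submodule.finrank_quotient_add_finrank P
    rw [hP1, hfr] at this
    omega
  have hW' : Module.finrank (ZMod 3) (Fin (v-1) → ZMod 3) = v - 1 := Module.finrank_fin_fun _
  let e : (V ⧸ P) ≃ₗ[ZMod 3] (Fin (v-1) → ZMod 3) :=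
    LinearEquiv.ofFinrankEq _ _ (hquot.trans hW'.symm)
  set f : V →ₗ[ZMod 3] (Fin (v-1) → ZMod 3) := e.toLinearMap ∘ₗ P.mkQ with hf
  have hkerf : LinearMap.ker f = P := by
    rw [hf, LinearMap.ker_comp, LinearEquiv.ker, Submodule.comap_bot, Submodule.ker_mkQ]
  have hsurjf : Function.Surjective f := by
    rw [hf, LinearMap.coe_comp]
    exact e.surjective.comp (Submodule.mkQ_surjective P)
  -- rank is preserved on subspaces meeting the kernel trivially
  have hrank_map : ∀ Q : Submodule (ZMod 3) V, Q ⊓ P = ⊥ →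
      Module.finrank (ZMod 3) (Q.map f) = Module.finrank (ZMod 3) Q := by
    intro Q hQP
    set g := f ∘ₗ Q.subtype with hg
    have hkerg : LinearMap.ker g = ⊥ := by
      rw [Submodule.eq_bot_iff]
      intro x hx
      rw [LinearMap.mem_ker, hg, LinearMap.comp_apply] at hx
      have hx2 : (x : V) ∈ Q ⊓ P := ⟨x.2, by rw [← hkerf]; exact hx⟩
      rw [hQP] at hx2
      exact Subtype.ext hx2
    have hrg : LinearMap.range g = Q.map f := by
      rw [hg, LinearMap.range_comp, Submodule.range_subtype]
    have := LinearMap.finrank_range_add_finrank_ker g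
    rw [hkerg, finrank_bot, hrg] at this
    omega
  -- the image point set
  set C' := C.image (fun Q => Q.map f) with hC'
  have hinj : Set.InjOn (fun Q => Q.map f) (C : Set (Submodule (ZMod 3) V)) := by
    intro Q hQ R hR heq0
    have heq : Q.map f = R.map f := heq0
    by_contra hne
    have hQP : Q ⊓ P = ⊥ := point_inf_eq_bot (hCpts Q hQ) hP1 (fun h => hPne Q hQ h.symm)
    have hQbot : Q ≠ ⊥ := by
      intro h
      exact absurd (hCpts Q hQ) (by rw [h, finrank_bot]; norm_num)
    obtain ⟨x, hxQ, hx0⟩ := Submodule.exists_mem_ne_zero_of_ne_bot hQbot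
    have hfx : f x ∈ R.map f := by
      rw [← heq]
      exact Submodule.mem_map_of_mem hxQ
    obtain ⟨r, hrR, hfr2⟩ := Submodule.mem_map.1 hfx
    have hxr : x - r ∈ LinearMap.ker f := by
      rw [LinearMap.mem_ker, map_sub, hfr2, sub_self]
    rw [hkerf] at hxr
    have hxrne : x - r ≠ 0 := by
      intro h
      have hxR : x ∈ R := by
        have : x = r := by linear_combination (norm := module) h
        exact this ▸ hrR
      have : x ∈ Q ⊓ R := ⟨hxQ, hxR⟩
      rw [point_inf_eq_bot (hCpts Q hQ) (hCpts R hR) hne] at this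
      exact hx0 this
    have hPle : P ≤ Q ⊔ R := by
      have hsp : Submodule.span (ZMod 3) {x - r} = P := by
        apply Submodule.eq_of_le_of_finrank_le
          ((Submodule.span_singleton_le_iff_mem _ _).2 hxr)
        rw [finrank_span_singleton hxrne, hP1]
      rw [← hsp]
      apply (Submodule.span_singleton_le_iff_mem _ _).2
      exact Submodule.sub_mem _ (Submodule.mem_sup_left hxQ) (Submodule.mem_sup_right hrR)
    exact hPgood Q hQ R hR hPle
  have hcard' : C'.card = 89 := by
    rw [hC', Finset.card_image_of_injOn hinj, hcard]
  have hpts' : IsPointSet C' := by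
    intro Q' hQ'
    rw [hC', Finset.mem_image] at hQ'
    obtain ⟨Q, hQ, rfl⟩ := hQ'
    rw [hrank_map Q (point_inf_eq_bot (hCpts Q hQ) hP1 (fun h => hPne Q hQ h.symm)),
      hCpts Q hQ]
  have hdiv' : DivisibleSet 9 C' := by
    intro H' hH'
    have hH'fr : Module.finrank (ZMod 3) H' = v - 2 := by
      unfold IsHyperplane at hH'
      rw [hW'] at hH'
      omega
    set H := Submodule.comap f H' with hH
    have hPleH : P ≤ H := by
      rw [hH, ← hkerf]
      intro x hx
      rw [Submodule.mem_comap, LinearMap.mem_ker.1 hx]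
      exact H'.zero_mem
    have hHfr : Module.finrank (ZMod 3) H = v - 1 := by
      set g := f ∘ₗ H.subtype with hg
      have hrg : LinearMap.range g = H' := by
        rw [hg, LinearMap.range_comp, Submodule.range_subtype, hH,
          Submodule.map_comap_eq_of_surjective hsurjf]
      have hkg : LinearMap.ker g = Submodule.comap H.subtype P := by
        rw [hg, LinearMap.ker_comp, hkerf]
      have hkgfr : Module.finrank (ZMod 3) (LinearMap.ker g) = 1 := by
        rw [hkg, LinearEquiv.finrank_eq (Submodule.comapSubtypeEquivOfLe hPleH), hP1]
      have := LinearMap.finrank_range_add_finrank_ker g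
      rw [hrg, hkgfr, hH'fr] at this
      omega
    have hHhyp : IsHyperplane H := by
      unfold IsHyperplane
      rw [hHfr, hfr]
    have hIC : interCard C' H' = interCard C H := by
      unfold interCard
      rw [hC', Finset.filter_image]
      rw [Finset.card_image_of_injOn (hinj.mono (Finset.filter_subset _ _))]
      congr 1
      apply Finset.filter_congr
      intro Q hQ
      constructor
      · intro h
        rwa [← Submodule.map_le_iff_le_comap]
      · intro h
        rwa [Submodule.map_le_iff_le_comap]
    rw [hIC, hcard']
    rw [← hcard]
    exact hdiv H hHhyp
  exact ⟨C', hpts', hdiv', hcard'⟩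

end Step

lemma main_aux : ∀ v : ℕ, 2 ≤ v → ∀ C : Finset (Submodule (ZMod 3) (Fin v → ZMod 3)),
    IsPointSet C → DivisibleSet 9 C → C.card = 89 → False := by
  intro v
  induction v using Nat.strong_induction_on with
  | _ v ih =>
    intro hv2 C hpts hdiv hcard
    rcases le_or_gt v 8 with h8 | h9
    · exact base_case hv2 h8 C hpts hdiv hcard
    · obtain ⟨C', h1, h2, h3⟩ := step_case (by omega) C hpts hdiv hcard
      exact ih (v-1) (by omega) (by omega) C' h1 h2 h3



/-- Lemma 6.9: there is no `9`-divisible set of points of `PG(v-1, 3)` of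
cardinality `89`. -/
theorem no_9_divisible_89 :
    ¬ ∃ v : ℕ, 2 ≤ v ∧ ∃ C : Finset (Submodule (ZMod 3) (Fin v → ZMod 3)),
      IsPointSet C ∧ DivisibleSet 9 C ∧ C.card = 89 := by
  rintro ⟨v, hv, C, hpts, hdiv, hcard⟩
  exact main_aux v hv C hpts hdiv hcard
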